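/- Let (G,M,I) be a formal context whose incompatibility graph is connected and bipartite. Then there exist two disjoint Ferrers relations F1, F2 with F1 ∪ F2 = I, these two factors are unique up to swapping (any two ordinal two-factorizations of (G,M,I) into disjoint Ferrers relations coincide as unordered pairs), and F1 and F2 are exactly the two bipartition (color) classes of the incompatibility graph. -/

import Mathlib

/-!
A Ferrers relation contained in `I` contains no incompatible pair, so a factorization of `I`
into two disjoint Ferrers relations is a proper 2-colouring of the incompatibility graph; in a
connected graph such a colouring is unique up to swapping the colours. Conversely, each colour
class `A` of a 2-colouring is Ferrers. If `(g,m), (h,n) ∈ A` but neither cross `(g,n)`, `(h,m)`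
lies in `A`, one cross lies in `I` outside `A`; transporting an invariant along a path of the
incompatibility graph shows that then the other cross lies in `I` as well, and following a single
edge out of `(g,n)` shows that the two crosses cannot both lie in `I \ A`.
-/

set_option linter.unnecessarySimpa false

/-- A Ferrers relation: whenever `(g,m) ∈ F` and `(h,n) ∈ F`,
then `(g,n) ∈ F` or `(h,m) ∈ F`. -/
def IsFerrers {G M : Type*} (F : Set (G × M)) : Prop :=
  ∀ g h : G, ∀ m n : M, (g, m) ∈ F → (h, n) ∈ F → (g, n) ∈ F ∨ (h, m) ∈ F

/-- Two pairs `p, q ∈ I` are incompatible if `(p.1, q.2) ∉ I` and `(q.1, p.2) ∉ I`. -/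
def Incompatible {G M : Type*} (I : Set (G × M)) (p q : G × M) : Prop :=
  p ∈ I ∧ q ∈ I ∧ (p.1, q.2) ∉ I ∧ (q.1, p.2) ∉ I

/-- The incompatibility graph of a formal context `(G, M, I)`: vertices are the
elements of `I`, with an edge between each pair of incompatible elements. -/
def IncompGraph {G M : Type*} (I : Set (G × M)) : SimpleGraph I where
  Adj p q := Incompatible I p.1 q.1
  symm := ⟨fun _ _ h => ⟨h.2.1, h.1, h.2.2.2, h.2.2.1⟩⟩
  loopless := ⟨fun p h => h.2.2.1 (by simpa using h.1)⟩

theorem SimpleGraph.Preconnected.induction_on_adj {V : Type*} {G : SimpleGraph V}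
    (hG : G.Preconnected) {P : V → Prop} (hP : ∀ u v, G.Adj u v → P u → P v) {u v : V}
    (hu : P u) : P v := by
  obtain ⟨w⟩ := hG u v
  induction w with
  | nil => exact hu
  | cons huv _ ih => exact ih (hP _ _ huv hu)

section

variable {G M : Type*} {I A : Set (G × M)}

theorem IncompGraph.induction_of_preconnected (hconn : (IncompGraph I).Preconnected)
    {P : G × M → Prop} (hP : ∀ p q, Incompatible I p q → P p → P q) {p q : G × M}
    (hp : p ∈ I) (hq : q ∈ I) (h : P p) : P q :=
  hconn.induction_on_adj (P := fun x => P x.1) (fun u v huv => hP u v huv)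
    (u := ⟨p, hp⟩) (v := ⟨q, hq⟩) h

theorem IsFerrers.not_incompatible {F : Set (G × M)} (hF : IsFerrers F) (hFI : F ⊆ I)
    {p q : G × M} (hp : p ∈ F) (hq : q ∈ F) : ¬Incompatible I p q := by
  rintro ⟨-, -, hpq, hqp⟩
  rcases hF p.1 q.1 p.2 q.2 hp hq with h | h
  exacts [hpq (hFI h), hqp (hFI h)]

structure IsBipartitionClass (I A : Set (G × M)) : Prop where
  subset : A ⊆ I
  indep : ∀ p ∈ A, ∀ q ∈ A, ¬Incompatible I p q
  indep_diff : ∀ p ∈ I \ A, ∀ q ∈ I \ A, ¬Incompatible I p q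

theorem isBipartitionClass_of_coloring (C : (IncompGraph I).Coloring (Fin 2)) :
    IsBipartitionClass I {x | ∃ hx : x ∈ I, C ⟨x, hx⟩ = 0} where
  subset _ hx := hx.1
  indep := by
    rintro p ⟨hp, hp0⟩ q ⟨hq, hq0⟩ hpq
    exact C.valid (show (IncompGraph I).Adj ⟨p, hp⟩ ⟨q, hq⟩ from hpq) (hp0.trans hq0.symm)
  indep_diff := by
    rintro p ⟨hp, hpA⟩ q ⟨hq, hqA⟩ hpq
    refine C.valid (show (IncompGraph I).Adj ⟨p, hp⟩ ⟨q, hq⟩ from hpq) ?_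
    have hp1 : C ⟨p, hp⟩ ≠ 0 := fun h => hpA ⟨hp, h⟩
    have hq1 : C ⟨q, hq⟩ ≠ 0 := fun h => hqA ⟨hq, h⟩
    omega

namespace IsBipartitionClass

theorem diff (hA : IsBipartitionClass I A) : IsBipartitionClass I (I \ A) where
  subset := Set.sdiff_subset
  indep := hA.indep_diff
  indep_diff := by
    rw [Set.sdiff_sdiff_cancel_left hA.subset]
    exact hA.indep

theorem mem_iff_not_mem_of_incompatible (hA : IsBipartitionClass I A) {p q : G × M}
    (hpq : Incompatible I p q) : p ∈ A ↔ q ∉ A := by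
  have h₁ := fun hp hq => hA.indep p hp q hq hpq
  have h₂ := fun hp hq => hA.indep_diff p ⟨hpq.1, hp⟩ q ⟨hpq.2.1, hq⟩ hpq
  tauto

theorem mem_of_not_mem_of_same_side (hA : IsBipartitionClass I A) {p q : G × M} (hp : p ∈ I)
    (hq : q ∈ I) (hside : p ∈ A ↔ q ∈ A) (hpq : (p.1, q.2) ∉ I) : (q.1, p.2) ∈ I := by
  by_contra hqp
  have := hA.mem_iff_not_mem_of_incompatible ⟨hp, hq, hpq, hqp⟩
  tauto

theorem eq_or_eq_diff (hconn : (IncompGraph I).Preconnected) (hA : IsBipartitionClass I A)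
    {B : Set (G × M)} (hB : IsBipartitionClass I B) : B = A ∨ B = I \ A := by
  by_cases hsame : ∀ x ∈ I, (x ∈ A ↔ x ∈ B)
  · left
    ext x
    exact ⟨fun hx => (hsame x (hB.subset hx)).2 hx, fun hx => (hsame x (hA.subset hx)).1 hx⟩
  · right
    obtain ⟨x₀, hx₀, hdiff⟩ := not_forall₂.mp hsame
    have hflip : ∀ x ∈ I, ¬(x ∈ A ↔ x ∈ B) := fun x hx =>
      IncompGraph.induction_of_preconnected hconn (P := fun x => ¬(x ∈ A ↔ x ∈ B))
        (fun p q hpq => by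
          have := hA.mem_iff_not_mem_of_incompatible hpq
          have := hB.mem_iff_not_mem_of_incompatible hpq
          tauto) hx₀ hx hdiff
    ext x
    refine ⟨fun hx => ⟨hB.subset hx, fun hxA => hflip x (hB.subset hx) (iff_of_true hxA hx)⟩,
      fun ⟨hx, hxA⟩ => ?_⟩
    have := hflip x hx
    tauto

theorem mem_cross_of_opposite_cross (hconn : (IncompGraph I).Preconnected)
    (hA : IsBipartitionClass I A) {g h : G} {m n : M} (hgm : (g, m) ∈ I) (hhn : (h, n) ∈ I)
    (hside : (g, m) ∈ A ↔ (h, n) ∈ A) (hgn : (g, n) ∈ I) (hgn_side : (g, n) ∈ A ↔ (g, m) ∉ A) :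
    (h, m) ∈ I := by
  by_contra hhm
  -- Since `(h, m) ∉ I`, this invariant propagates along edges from `(g, n)` to `(h, n)`.
  let P : G × M → Prop := fun x => (h, x.2) ∈ I ∧ (x.1, m) ∈ I ∧
    ((h, x.2) ∈ A ↔ x ∉ A) ∧ ((x.1, m) ∈ A ↔ x ∉ A)
  have hstep : ∀ x y, Incompatible I x y → P x → P y := by
    rintro x y hxy ⟨hs, ht, hs_side, ht_side⟩
    have hflip := hA.mem_iff_not_mem_of_incompatible hxy
    have hs' : (h, y.2) ∈ I :=
      hA.mem_of_not_mem_of_same_side (p := y) (q := (h, x.2)) hxy.2.1 hs (by tauto) hxy.2.2.2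
    have ht' : (y.1, m) ∈ I :=
      hA.mem_of_not_mem_of_same_side (p := (x.1, m)) (q := y) ht hxy.2.1 (by tauto) hxy.2.2.1
    have hs'_side := hA.mem_iff_not_mem_of_incompatible ⟨hs', ht, hhm, hxy.2.2.1⟩
    have ht'_side := hA.mem_iff_not_mem_of_incompatible ⟨ht', hs, hxy.2.2.2, hhm⟩
    exact ⟨hs', ht', by tauto, by tauto⟩
  obtain ⟨-, hhm', -⟩ : P (h, n) :=
    IncompGraph.induction_of_preconnected hconn hstep hgn hhn ⟨hhn, hgm, by tauto, by tauto⟩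
  exact hhm hhm'

theorem not_both_crosses_opposite (hconn : (IncompGraph I).Preconnected)
    (hA : IsBipartitionClass I A) {g h : G} {m n : M} (hgm : (g, m) ∈ I) (hhn : (h, n) ∈ I)
    (hside : (g, m) ∈ A ↔ (h, n) ∈ A) (hgn : (g, n) ∈ I) (hhm : (h, m) ∈ I)
    (hgn_side : (g, n) ∈ A ↔ (g, m) ∉ A) : ¬((h, m) ∈ A ↔ (g, m) ∉ A) := by
  intro hhm_side
  have : Nontrivial I := nontrivial_of_ne ⟨(g, n), hgn⟩ ⟨(h, n), hhn⟩ fun he => by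
    cases congrArg Subtype.val he
    tauto
  obtain ⟨⟨⟨a, b⟩, hab⟩, -, -, hgb, han⟩ := hconn.exists_adj_of_nontrivial ⟨(g, n), hgn⟩
  have hab_side := hA.mem_iff_not_mem_of_incompatible (p := (g, n)) ⟨hgn, hab, hgb, han⟩
  have ham : (a, m) ∈ I :=
    hA.mem_of_not_mem_of_same_side (p := (g, m)) (q := (a, b)) hgm hab (by tauto) hgb
  have ham_side : (a, m) ∈ A ↔ (g, m) ∈ A := by
    by_contra hne
    exact hgb (mem_cross_of_opposite_cross hconn hA hab hgm (by tauto) ham (by tauto))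
  exact han (mem_cross_of_opposite_cross hconn hA hhn ham (by tauto) hhm (by tauto))

theorem isFerrers (hconn : (IncompGraph I).Preconnected) (hA : IsBipartitionClass I A) :
    IsFerrers A := by
  intro g h m n hgm hhn
  by_contra! hcross
  have hside : (g, m) ∈ A ↔ (h, n) ∈ A := iff_of_true hgm hhn
  have hgmI := hA.subset hgm
  have hhnI := hA.subset hhn
  have hgnI : (g, n) ∈ I := by
    by_contra hgnI
    have hhmI := hA.mem_of_not_mem_of_same_side hgmI hhnI hside hgnI
    exact hgnI (mem_cross_of_opposite_cross hconn hA hhnI hgmI hside.symm hhmI (by tauto))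
  have hhmI := mem_cross_of_opposite_cross hconn hA hgmI hhnI hside hgnI (by tauto)
  exact not_both_crosses_opposite hconn hA hgmI hhnI hside hgnI hhmI (by tauto) (by tauto)

end IsBipartitionClass

end

/-- If the incompatibility graph of a formal context `(G, M, I)` is connected and
bipartite, then there are two disjoint Ferrers relations `F1`, `F2` with
`F1 ∪ F2 = I`; they are independent sets of the incompatibility graph (i.e. they
are its two bipartition classes), and any ordinal two-factorization of `(G, M, I)`
into disjoint Ferrers relations coincides with `F1, F2` up to swapping. -/
theorem connected_bipartite_unique_disjoint_factorization {G M : Type*}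
    (I : Set (G × M)) (hconn : (IncompGraph I).Connected)
    (hbip : (IncompGraph I).Colorable 2) :
    ∃ F1 F2 : Set (G × M),
      IsFerrers F1 ∧ IsFerrers F2 ∧ Disjoint F1 F2 ∧ F1 ∪ F2 = I ∧
      (∀ p ∈ F1, ∀ q ∈ F1, ¬ Incompatible I p q) ∧
      (∀ p ∈ F2, ∀ q ∈ F2, ¬ Incompatible I p q) ∧
      (∀ G1 G2 : Set (G × M), IsFerrers G1 → IsFerrers G2 → Disjoint G1 G2 →
        G1 ∪ G2 = I → (G1 = F1 ∧ G2 = F2) ∨ (G1 = F2 ∧ G2 = F1)) := by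
  obtain ⟨C⟩ := hbip
  have hA := isBipartitionClass_of_coloring C
  refine ⟨_, _, hA.isFerrers hconn.preconnected, hA.diff.isFerrers hconn.preconnected,
    Set.disjoint_sdiff_right, Set.union_sdiff_cancel hA.subset, hA.indep, hA.indep_diff, ?_⟩
  intro G1 G2 hG1 hG2 hdisj hunion
  have hG1I : G1 ⊆ I := hunion ▸ Set.subset_union_left
  have hG2I : G2 ⊆ I := hunion ▸ Set.subset_union_right
  have hG2_eq : G2 = I \ G1 := by
    rw [← hunion, Set.union_sdiff_cancel_left hdisj.inter_eq.subset]
  have hB : IsBipartitionClass I G1 :=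
    ⟨hG1I, fun _ hp _ hq => hG1.not_incompatible hG1I hp hq,
      fun _ hp _ hq => hG2.not_incompatible hG2I (hG2_eq ▸ hp) (hG2_eq ▸ hq)⟩
  rcases hA.eq_or_eq_diff hconn.preconnected hB with rfl | rfl
  · exact Or.inl ⟨rfl, hG2_eq⟩
  · exact Or.inr ⟨rfl, hG2_eq.trans (Set.sdiff_sdiff_cancel_left hA.subset)⟩
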